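/- Let A be an n×n symmetric real matrix, M an n×n symmetric real matrix, B an m×n real matrix and C an n×m real matrix with A·C = 0, M·C = Bᵀ, L := B·C invertible, and A + Bᵀ·L⁻¹·B invertible; set V := (A + Bᵀ·L⁻¹·B)⁻¹·(I − Bᵀ·L⁻¹·Cᵀ). Then for any m×m real matrix D, the block matrix [[A, Bᵀ],[B, D]] multiplied by [[V − C·L⁻¹·D·L⁻¹·Cᵀ, C·L⁻¹],[L⁻¹·Cᵀ, 0]] equals the identity; in particular [[A, Bᵀ],[B, D]] is invertible and its inverse does not involve the inverse of D. -/

import Mathlib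

/-!
Multiplying out the blocks, `A C = 0` and `B C = L` make every term containing `D` cancel, so
the identity reduces to `A V + Bᵀ L⁻¹ Cᵀ = 1` and `B V = 0`. Both follow from `K C = Bᵀ` for
`K = A + Bᵀ L⁻¹ B`: since `L = Cᵀ M C` is symmetric, so is `K`, and transposing `K⁻¹ Bᵀ = C`
gives `B K⁻¹ = Cᵀ`, whence `B V = Cᵀ - Lᵀ L⁻¹ Cᵀ = 0`.
-/

open Matrix

namespace Matrix

variable {R : Type*} [CommRing R] {n m : Type*} [Fintype n]

lemma isSymm_mul_of_mul_eq_transpose {M : Matrix n n R} {B : Matrix m n R} {C : Matrix n m R}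
    (hM : M.IsSymm) (hMC : M * C = Bᵀ) : (B * C).IsSymm := by
  have hB : B = Cᵀ * M := by rw [← transpose_transpose B, ← hMC, transpose_mul, hM.eq]
  simp only [IsSymm, hB, transpose_mul, transpose_transpose, hM.eq, Matrix.mul_assoc]

variable [Fintype m] [DecidableEq m]

lemma add_transpose_mul_inv_mul_mul_eq {A : Matrix n n R} {B : Matrix m n R}
    {C : Matrix n m R} (hAC : A * C = 0) (hL : IsUnit (B * C)) :
    (A + Bᵀ * (B * C)⁻¹ * B) * C = Bᵀ := by
  rw [Matrix.add_mul, hAC, zero_add, Matrix.mul_assoc, Matrix.mul_assoc,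
    nonsing_inv_mul _ ((isUnit_iff_isUnit_det _).mp hL), Matrix.mul_one]

variable [DecidableEq n]

theorem fromBlocks_mul_fromBlocks_eq_one {A V : Matrix n n R} {E : Matrix n m R}
    {B : Matrix m n R} {C : Matrix n m R} {F : Matrix m n R} (D : Matrix m m R)
    (hAC : A * C = 0) (hL : IsUnit (B * C)) (hAV : A * V + E * (B * C)⁻¹ * F = 1)
    (hBV : B * V = 0) :
    fromBlocks A E B D *
        fromBlocks (V - C * (B * C)⁻¹ * D * (B * C)⁻¹ * F) (C * (B * C)⁻¹) ((B * C)⁻¹ * F) 0 =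
      1 := by
  have hLL : B * C * (B * C)⁻¹ = 1 := mul_nonsing_inv _ ((isUnit_iff_isUnit_det _).mp hL)
  rw [fromBlocks_multiply, ← fromBlocks_one]
  congr 1
  · simp only [Matrix.mul_sub, ← Matrix.mul_assoc, hAC, Matrix.zero_mul, sub_zero, ← hAV]
  · simp only [← Matrix.mul_assoc, hAC, Matrix.zero_mul, Matrix.mul_zero, add_zero]
  · simp only [Matrix.mul_sub, ← Matrix.mul_assoc, hBV, hLL, Matrix.one_mul, zero_sub,
      neg_add_cancel]
  · simp only [← Matrix.mul_assoc, hLL, Matrix.mul_zero, add_zero]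

variable {A : Matrix n n R} {B : Matrix m n R} {C : Matrix n m R}

lemma mul_inv_add_transpose_mul_inv_mul_eq (hA : A.IsSymm) (hL : (B * C).IsSymm)
    (hKC : (A + Bᵀ * (B * C)⁻¹ * B) * C = Bᵀ) (hK : IsUnit (A + Bᵀ * (B * C)⁻¹ * B)) :
    B * (A + Bᵀ * (B * C)⁻¹ * B)⁻¹ = Cᵀ := by
  set K := A + Bᵀ * (B * C)⁻¹ * B
  have hKsymm : K.IsSymm := hA.add (by
    simp only [IsSymm, transpose_mul, transpose_transpose, hL.inv.eq, Matrix.mul_assoc])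
  have hKinv : K⁻¹ * Bᵀ = C := by
    rw [← hKC, nonsing_inv_mul_cancel_left _ _ ((isUnit_iff_isUnit_det _).mp hK)]
  simpa only [transpose_mul, transpose_transpose, transpose_nonsing_inv, hKsymm.eq]
    using congrArg transpose hKinv

lemma mul_inv_add_transpose_mul_inv_mul_mul_eq_zero (hL : (B * C).IsSymm)
    (hLu : IsUnit (B * C)) (hBK : B * (A + Bᵀ * (B * C)⁻¹ * B)⁻¹ = Cᵀ) :
    B * ((A + Bᵀ * (B * C)⁻¹ * B)⁻¹ * (1 - Bᵀ * (B * C)⁻¹ * Cᵀ)) = 0 := by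
  rw [← Matrix.mul_assoc, hBK, Matrix.mul_sub, Matrix.mul_one, ← Matrix.mul_assoc,
    ← Matrix.mul_assoc, ← transpose_mul, hL.eq,
    mul_nonsing_inv _ ((isUnit_iff_isUnit_det _).mp hLu), Matrix.one_mul, sub_self]

lemma mul_add_transpose_mul_inv_mul_eq_one {V : Matrix n n R}
    (hK : IsUnit (A + Bᵀ * (B * C)⁻¹ * B))
    (hV : V = (A + Bᵀ * (B * C)⁻¹ * B)⁻¹ * (1 - Bᵀ * (B * C)⁻¹ * Cᵀ)) (hBV : B * V = 0) :
    A * V + Bᵀ * (B * C)⁻¹ * Cᵀ = 1 := by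
  have hKV : (A + Bᵀ * (B * C)⁻¹ * B) * V = 1 - Bᵀ * (B * C)⁻¹ * Cᵀ := by
    rw [hV, ← Matrix.mul_assoc, mul_nonsing_inv _ ((isUnit_iff_isUnit_det _).mp hK),
      Matrix.one_mul]
  rw [Matrix.add_mul, Matrix.mul_assoc _ B, hBV, Matrix.mul_zero, add_zero] at hKV
  rw [hKV, sub_add_cancel]

end Matrix

theorem stmt16_general {n m : ℕ}
    (A M : Matrix (Fin n) (Fin n) ℝ) (B : Matrix (Fin m) (Fin n) ℝ)
    (C : Matrix (Fin n) (Fin m) ℝ)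
    (hA : Aᵀ = A) (hM : Mᵀ = M)
    (hAC : A * C = 0) (hMC : M * C = Bᵀ)
    (hL : IsUnit (B * C))
    (hInv : IsUnit (A + Bᵀ * (B * C)⁻¹ * B))
    (V : Matrix (Fin n) (Fin n) ℝ)
    (hV : V = (A + Bᵀ * (B * C)⁻¹ * B)⁻¹ * (1 - Bᵀ * (B * C)⁻¹ * Cᵀ))
    (D : Matrix (Fin m) (Fin m) ℝ) :
    (Matrix.fromBlocks A Bᵀ B D) *
        (Matrix.fromBlocks (V - C * (B * C)⁻¹ * D * (B * C)⁻¹ * Cᵀ)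
          (C * (B * C)⁻¹) ((B * C)⁻¹ * Cᵀ) 0) = 1 ∧
      IsUnit (Matrix.fromBlocks A Bᵀ B D) ∧
      (Matrix.fromBlocks A Bᵀ B D)⁻¹ =
        Matrix.fromBlocks (V - C * (B * C)⁻¹ * D * (B * C)⁻¹ * Cᵀ)
          (C * (B * C)⁻¹) ((B * C)⁻¹ * Cᵀ) 0 := by
  have hLsymm := isSymm_mul_of_mul_eq_transpose hM hMC
  have hBK := mul_inv_add_transpose_mul_inv_mul_eq hA hLsymm
    (add_transpose_mul_inv_mul_mul_eq hAC hL) hInv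
  have hBV : B * V = 0 := hV ▸ mul_inv_add_transpose_mul_inv_mul_mul_eq_zero hLsymm hL hBK
  have hprod := fromBlocks_mul_fromBlocks_eq_one D hAC hL
    (mul_add_transpose_mul_inv_mul_eq_one hInv hV hBV) hBV
  exact ⟨hprod, IsUnit.of_mul_eq_one _ hprod, inv_eq_right_inv hprod⟩

theorem stmt16 {n m : ℕ} (hn : 0 < n) (hm : 0 < m)
    (A M : Matrix (Fin n) (Fin n) ℝ) (B : Matrix (Fin m) (Fin n) ℝ)
    (C : Matrix (Fin n) (Fin m) ℝ)
    (hA : Aᵀ = A) (hM : Mᵀ = M)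
    (hAC : A * C = 0) (hMC : M * C = Bᵀ)
    (hL : IsUnit (B * C))
    (hInv : IsUnit (A + Bᵀ * (B * C)⁻¹ * B))
    (V : Matrix (Fin n) (Fin n) ℝ)
    (hV : V = (A + Bᵀ * (B * C)⁻¹ * B)⁻¹ * (1 - Bᵀ * (B * C)⁻¹ * Cᵀ))
    (D : Matrix (Fin m) (Fin m) ℝ) :
    (Matrix.fromBlocks A Bᵀ B D) *
        (Matrix.fromBlocks (V - C * (B * C)⁻¹ * D * (B * C)⁻¹ * Cᵀ)
          (C * (B * C)⁻¹) ((B * C)⁻¹ * Cᵀ) 0) = 1 ∧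
      IsUnit (Matrix.fromBlocks A Bᵀ B D) ∧
      (Matrix.fromBlocks A Bᵀ B D)⁻¹ =
        Matrix.fromBlocks (V - C * (B * C)⁻¹ * D * (B * C)⁻¹ * Cᵀ)
          (C * (B * C)⁻¹) ((B * C)⁻¹ * Cᵀ) 0 :=
  stmt16_general A M B C hA hM hAC hMC hL hInv V hV D
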